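/- arXiv:2401.11253 — 5 statements merged into one kernel-verified Lean document; each statement's English description precedes it below -/
import Mathlib

section
/- Let A = {a,b,c,d,e} with constraints p(a)+p(c)+p(e) = 1 and p(b)+p(d)+p(e) = 1, all values positive, and frequencies n : A → ℕ all positive with N = n(a)+n(b)+n(c)+n(d)+n(e). Then the unique maximizer of Σ_x n(x)·ln(p(x)) is given by p(e) = n(e)/N, p(a) = (1−p(e))·n(a)/(n(a)+n(c)), p(c) = (1−p(e))·n(c)/(n(a)+n(c)), p(b) = (1−p(e))·n(b)/(n(b)+n(d)), p(d) = (1−p(e))·n(d)/(n(b)+n(d)). -/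
/-!
Gibbs' inequality `n log (q / p) ≤ n (q / p - 1)`, strict unless `q = p`, bounds
`ℓ q - ℓ p*` by `∑ n_x q_x / p*_x - N`. The candidate `p*` is the Lagrange point: `n_x / p*_x`
equals `N` at `e`, `(n_a + n_c) / (1 - p*_e)` on the edge `{a, c}` and `(n_b + n_d) / (1 - p*_e)`
on `{b, d}`, so the two edge constraints force `∑ n_x q_x / p*_x = N` for every feasible `q`.
Hence `ℓ q ≤ ℓ p*`, with equality only at `q = p*`.
-/

open Finset Real

section Gibbs

variable {ι : Type*} {s : Finset ι} {n p q : ι → ℝ}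

theorem mul_log_sub_log_le_mul_div_sub_one {m x y : ℝ} (hm : 0 ≤ m) (hx : 0 < x) (hy : 0 < y) :
    m * (log x - log y) ≤ m * (x / y - 1) := by
  rw [← log_div hx.ne' hy.ne']
  exact mul_le_mul_of_nonneg_left (log_le_sub_one_of_pos (div_pos hx hy)) hm

theorem mul_log_sub_log_lt_mul_div_sub_one {m x y : ℝ} (hm : 0 < m) (hx : 0 < x) (hy : 0 < y)
    (hxy : x ≠ y) : m * (log x - log y) < m * (x / y - 1) := by
  rw [← log_div hx.ne' hy.ne']
  exact mul_lt_mul_of_pos_left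
    (log_lt_sub_one_of_pos (div_pos hx hy) (div_ne_one_of_ne hxy)) hm

theorem sum_mul_log_le_of_sum_mul_div_eq (hn : ∀ i ∈ s, 0 ≤ n i) (hp : ∀ i ∈ s, 0 < p i)
    (hq : ∀ i ∈ s, 0 < q i) (h : ∑ i ∈ s, n i * q i / p i = ∑ i ∈ s, n i) :
    ∑ i ∈ s, n i * log (q i) ≤ ∑ i ∈ s, n i * log (p i) := by
  have : ∑ i ∈ s, n i * (log (q i) - log (p i)) ≤ ∑ i ∈ s, n i * (q i / p i - 1) :=
    sum_le_sum fun i hi => mul_log_sub_log_le_mul_div_sub_one (hn i hi) (hq i hi) (hp i hi)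
  simp only [mul_sub, mul_one, sum_sub_distrib, ← mul_div_assoc, h] at this
  linarith

theorem eq_of_sum_mul_log_le_of_sum_mul_div_eq (hn : ∀ i ∈ s, 0 < n i) (hp : ∀ i ∈ s, 0 < p i)
    (hq : ∀ i ∈ s, 0 < q i) (h : ∑ i ∈ s, n i * q i / p i = ∑ i ∈ s, n i)
    (hle : ∑ i ∈ s, n i * log (p i) ≤ ∑ i ∈ s, n i * log (q i)) :
    ∀ i ∈ s, q i = p i := by
  by_contra! ⟨j, hj, hqp⟩
  have : ∑ i ∈ s, n i * (log (q i) - log (p i)) < ∑ i ∈ s, n i * (q i / p i - 1) :=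
    sum_lt_sum (fun i hi => mul_log_sub_log_le_mul_div_sub_one (hn i hi).le (hq i hi) (hp i hi))
      ⟨j, hj, mul_log_sub_log_lt_mul_div_sub_one (hn j hj) (hq j hj) (hp j hj) hqp⟩
  simp only [mul_sub, mul_one, sum_sub_distrib, ← mul_div_assoc, h] at this
  linarith

end Gibbs

theorem candidate_sum_mul_div_eq {na nb nc nd ne a b c d e : ℝ} (hna : 0 < na) (hnb : 0 < nb)
    (hnc : 0 < nc) (hnd : 0 < nd) (hne : 0 < ne) (hace : a + c + e = 1) (hbde : b + d + e = 1) :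
    let N := na + nb + nc + nd + ne
    let pe := ne / N
    na * a / ((1 - pe) * na / (na + nc)) + nb * b / ((1 - pe) * nb / (nb + nd)) +
        nc * c / ((1 - pe) * nc / (na + nc)) + nd * d / ((1 - pe) * nd / (nb + nd)) +
        ne * e / pe = N := by
  intro N pe
  have hN : 0 < N := by positivity
  have hpe : 1 - pe = (na + nb + nc + nd) / N := by
    simp only [pe, N]; field_simp; ring
  rw [hpe]
  simp only [pe]
  field_simp
  linear_combination (na + nc) * hace + (nb + nd) * hbde

theorem candidate_feasible {na nb nc nd ne : ℝ} (hna : 0 < na) (hnb : 0 < nb) (hnc : 0 < nc)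
    (hnd : 0 < nd) (hne : 0 < ne) :
    let pe := ne / (na + nb + nc + nd + ne)
    let pa := (1 - pe) * na / (na + nc)
    let pb := (1 - pe) * nb / (nb + nd)
    let pc := (1 - pe) * nc / (na + nc)
    let pd := (1 - pe) * nd / (nb + nd)
    0 < pa ∧ 0 < pb ∧ 0 < pc ∧ 0 < pd ∧ 0 < pe ∧ pa + pc + pe = 1 ∧ pb + pd + pe = 1 := by
  intro pe pa pb pc pd
  have hpe : 0 < 1 - pe := by
    rw [sub_pos, div_lt_one (by positivity)]
    linarith
  refine ⟨by positivity, by positivity, by positivity, by positivity, by positivity, ?_, ?_⟩ <;>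
  · simp only [pa, pb, pc, pd]
    field_simp
    ring

theorem stmt5 (na nb nc nd nE : ℕ)
    (hna : 0 < na) (hnb : 0 < nb) (hnc : 0 < nc) (hnd : 0 < nd) (hnE : 0 < nE)
    (pa pb pc pd pe : ℝ) :
    let N : ℝ := (na : ℝ) + nb + nc + nd + nE
    let Feas : ℝ → ℝ → ℝ → ℝ → ℝ → Prop := fun a b c d e =>
      0 < a ∧ 0 < b ∧ 0 < c ∧ 0 < d ∧ 0 < e ∧ a + c + e = 1 ∧ b + d + e = 1
    let ℓ : ℝ → ℝ → ℝ → ℝ → ℝ → ℝ := fun a b c d e =>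
      (na : ℝ) * Real.log a + (nb : ℝ) * Real.log b + (nc : ℝ) * Real.log c +
        (nd : ℝ) * Real.log d + (nE : ℝ) * Real.log e
    ((Feas pa pb pc pd pe ∧
        ∀ a b c d e, Feas a b c d e → ℓ a b c d e ≤ ℓ pa pb pc pd pe) ↔
      (pe = (nE : ℝ) / N ∧
       pa = (1 - pe) * (na : ℝ) / ((na : ℝ) + nc) ∧
       pc = (1 - pe) * (nc : ℝ) / ((na : ℝ) + nc) ∧
       pb = (1 - pe) * (nb : ℝ) / ((nb : ℝ) + nd) ∧
       pd = (1 - pe) * (nd : ℝ) / ((nb : ℝ) + nd))) := by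
  intro N Feas ℓ
  set n : Fin 5 → ℝ := ![na, nb, nc, nd, nE]
  have hn : ∀ i ∈ univ, 0 < n i := by simp [n, Fin.forall_fin_succ, hna, hnb, hnc, hnd, hnE]
  have hℓ : ∀ a b c d e, ℓ a b c d e = ∑ i, n i * log (![a, b, c, d, e] i) := by
    simp [ℓ, n, Fin.sum_univ_five]
  have hpos : ∀ {a b c d e}, Feas a b c d e → ∀ i ∈ univ, 0 < ![a, b, c, d, e] i := by
    rintro a b c d e ⟨ha, hb, hc, hd, he, -⟩
    simp [Fin.forall_fin_succ, ha, hb, hc, hd, he]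
  set e' := (nE : ℝ) / N
  set a' := (1 - e') * (na : ℝ) / ((na : ℝ) + nc)
  set c' := (1 - e') * (nc : ℝ) / ((na : ℝ) + nc)
  set b' := (1 - e') * (nb : ℝ) / ((nb : ℝ) + nd)
  set d' := (1 - e') * (nd : ℝ) / ((nb : ℝ) + nd)
  have hsum : ∀ {a b c d e}, Feas a b c d e →
      ∑ i, n i * ![a, b, c, d, e] i / ![a', b', c', d', e'] i = ∑ i, n i := by
    rintro a b c d e ⟨-, -, -, -, -, hace, hbde⟩
    simpa [n, Fin.sum_univ_five] using candidate_sum_mul_div_eq (by positivity) (by positivity)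
      (by positivity) (by positivity) (by positivity) hace hbde
  have hfeas : Feas a' b' c' d' e' :=
    candidate_feasible (by positivity) (by positivity) (by positivity) (by positivity) (by positivity)
  constructor
  · rintro ⟨hp, hmax⟩
    have heq := eq_of_sum_mul_log_le_of_sum_mul_div_eq hn (hpos hfeas) (hpos hp) (hsum hp)
      (by simpa only [hℓ] using hmax a' b' c' d' e' hfeas)
    simp only [mem_univ, forall_const, Fin.forall_fin_succ, Fin.isValue, Matrix.cons_val_zero,
      Matrix.cons_val_succ, Matrix.cons_val_fin_one] at heq
    obtain ⟨rfl, rfl, rfl, rfl, rfl⟩ := heq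
    exact ⟨rfl, rfl, rfl, rfl, rfl⟩
  · rintro ⟨rfl, rfl, rfl, rfl, rfl⟩
    refine ⟨hfeas, fun a b c d e hq => ?_⟩
    simpa only [hℓ] using sum_mul_log_le_of_sum_mul_div_eq (fun i hi => (hn i hi).le) (hpos hfeas)
      (hpos hq) (hsum hq)
end

section
/- In a product model, if for each j the conditional assignment q_j(x) = p(x)/p(B_j) maximizes the likelihood of the factor (B_j, 𝓑_j) on its frequencies, and p(B_j) = n(B_j)/Σ_i n(B_i), then p maximizes the likelihood over all probability assignments on the product. -/
open Finset

theorem stmt10 {α : Type*} [Fintype α] [DecidableEq α] (k : ℕ)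
    (B : Fin k → Finset α) (𝓑 : Fin k → Finset (Finset α))
    (hdisj : ∀ i j, i ≠ j → Disjoint (B i) (B j))
    (hEne : ∀ j, ∀ C ∈ 𝓑 j, C.Nonempty)
    (hsub : ∀ j, ∀ C ∈ 𝓑 j, C ⊆ B j)
    (hcov : ∀ j, (𝓑 j).biUnion id = B j)
    (hne : ∀ j, (𝓑 j).Nonempty)
    (n : α → ℕ) (hn : ∀ x, 0 < n x)
    (p : α → ℝ) (hppos : ∀ x, 0 < p x)
    (hp : ∀ C : Fin k → Finset α, (∀ j, C j ∈ 𝓑 j) →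
      ∑ x ∈ Finset.univ.biUnion C, p x = 1)
    (pB : Fin k → ℝ) (hpB : ∀ j, ∀ C ∈ 𝓑 j, ∑ x ∈ C, p x = pB j)
    (hfac : ∀ j, ∀ r : α → ℝ, ((∀ x ∈ B j, 0 < r x) ∧ ∀ C ∈ 𝓑 j, ∑ x ∈ C, r x = 1) →
      ∑ x ∈ B j, (n x : ℝ) * Real.log (r x) ≤
        ∑ x ∈ B j, (n x : ℝ) * Real.log (p x / pB j))
    (hmarg : ∀ j, pB j = (∑ x ∈ B j, (n x : ℝ)) / ∑ i, ∑ x ∈ B i, (n x : ℝ)) :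
    ∀ r : α → ℝ, (∀ x, 0 < r x) →
      (∀ C : Fin k → Finset α, (∀ j, C j ∈ 𝓑 j) →
        ∑ x ∈ Finset.univ.biUnion C, r x = 1) →
      ∑ x ∈ Finset.univ.biUnion B, (n x : ℝ) * Real.log (r x) ≤
        ∑ x ∈ Finset.univ.biUnion B, (n x : ℝ) * Real.log (p x) := by
  intro r hr hredge
  choose D hD using hne
  -- sum over a product edge decomposes
  have hbi : ∀ (C : Fin k → Finset α), (∀ j, C j ∈ 𝓑 j) → ∀ f : α → ℝ,
      ∑ x ∈ Finset.univ.biUnion C, f x = ∑ j, ∑ x ∈ C j, f x := by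
    intro C hC f
    apply Finset.sum_biUnion
    intro i _ j _ hij
    exact (hdisj i j hij).mono (hsub i _ (hC i)) (hsub j _ (hC j))
  have hbiB : ∀ f : α → ℝ,
      ∑ x ∈ Finset.univ.biUnion B, f x = ∑ j, ∑ x ∈ B j, f x := by
    intro f
    apply Finset.sum_biUnion
    intro i _ j _ hij
    exact hdisj i j hij
  set s : Fin k → ℝ := fun j => ∑ x ∈ D j, r x with hsdef
  -- r has constant sum on edges of each factor
  have hsC : ∀ j, ∀ C ∈ 𝓑 j, ∑ x ∈ C, r x = s j := by
    intro j C hC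
    have hupd : ∀ j', Function.update D j C j' ∈ 𝓑 j' := by
      intro j'
      rcases eq_or_ne j' j with rfl | h
      · simpa using hC
      · simpa [Function.update_of_ne h] using hD j'
    have h1 := hredge (Function.update D j C) hupd
    rw [hbi _ hupd r] at h1
    have h2 := hredge D hD
    rw [hbi D hD r] at h2
    have hpt : ∀ j' ∈ Finset.univ, ∑ x ∈ Function.update D j C j', r x =
        Function.update (fun j' => ∑ x ∈ D j', r x) j (∑ x ∈ C, r x) j' := by
      intro j' _
      rcases eq_or_ne j' j with rfl | h
      · simp
      · simp [Function.update_of_ne h]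
    rw [Finset.sum_congr rfl hpt, Finset.sum_update_of_mem (Finset.mem_univ j)] at h1
    rw [← Finset.add_sum_erase _ _ (Finset.mem_univ j)] at h2
    rw [show (Finset.univ \ {j} : Finset (Fin k)) = Finset.univ.erase j from
      Finset.sdiff_singleton_eq_erase j Finset.univ] at h1
    simp only [hsdef]
    linarith
  have spos : ∀ j, 0 < s j := by
    intro j
    exact Finset.sum_pos (fun x _ => hr x) (hEne j (D j) (hD j))
  have hsum1 : ∑ j, s j = 1 := by
    have := hredge D hD
    rwa [hbi D hD r] at this
  have pBpos : ∀ j, 0 < pB j := by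
    intro j
    rw [← hpB j (D j) (hD j)]
    exact Finset.sum_pos (fun x _ => hppos x) (hEne j (D j) (hD j))
  set N : Fin k → ℝ := fun j => ∑ x ∈ B j, (n x : ℝ) with hNdef
  have Npos : ∀ j, 0 < N j := by
    intro j
    exact Finset.sum_pos (fun x _ => by exact_mod_cast hn x)
      ((hEne j (D j) (hD j)).mono (hsub j (D j) (hD j)))
  set Ntot : ℝ := ∑ i, N i with hNtdef
  -- factor inequality rewritten
  have hf : ∀ j, (∑ x ∈ B j, (n x : ℝ) * Real.log (r x)) - N j * Real.log (s j) ≤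
      (∑ x ∈ B j, (n x : ℝ) * Real.log (p x)) - N j * Real.log (pB j) := by
    intro j
    have h := hfac j (fun x => r x / s j)
      ⟨fun x _ => div_pos (hr x) (spos j),
       fun C hC => by rw [← Finset.sum_div, hsC j C hC, div_self (spos j).ne']⟩
    have e1 : ∀ x ∈ B j, (n x : ℝ) * Real.log (r x / s j) =
        (n x : ℝ) * Real.log (r x) - (n x : ℝ) * Real.log (s j) := by
      intro x _
      rw [Real.log_div (hr x).ne' (spos j).ne']; ring
    have e2 : ∀ x ∈ B j, (n x : ℝ) * Real.log (p x / pB j) =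
        (n x : ℝ) * Real.log (p x) - (n x : ℝ) * Real.log (pB j) := by
      intro x _
      rw [Real.log_div (hppos x).ne' (pBpos j).ne']; ring
    rw [Finset.sum_congr rfl e1, Finset.sum_congr rfl e2, Finset.sum_sub_distrib,
      Finset.sum_sub_distrib, ← Finset.sum_mul, ← Finset.sum_mul] at h
    exact h
  -- Gibbs inequality
  have key : ∀ j, N j * Real.log (s j) - N j * Real.log (pB j) ≤ Ntot * s j - N j := by
    intro j
    have hNt : 0 < Ntot :=
      lt_of_lt_of_le (Npos j)
        (Finset.single_le_sum (fun i _ => (Npos i).le) (Finset.mem_univ j))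
    have hpBj : pB j = N j / Ntot := hmarg j
    have hle : Real.log (s j / pB j) ≤ s j / pB j - 1 :=
      Real.log_le_sub_one_of_pos (div_pos (spos j) (pBpos j))
    have hdivv : s j / pB j = Ntot * s j / N j := by
      rw [hpBj, div_div_eq_mul_div]
      ring
    calc N j * Real.log (s j) - N j * Real.log (pB j)
        = N j * Real.log (s j / pB j) := by
          rw [Real.log_div (spos j).ne' (pBpos j).ne']; ring
      _ ≤ N j * (s j / pB j - 1) := mul_le_mul_of_nonneg_left hle (Npos j).le
      _ = Ntot * s j - N j := by
          rw [hdivv, mul_sub, mul_one, mul_div_cancel₀ _ (Npos j).ne']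
  have gibbs : ∑ j, (N j * Real.log (s j) - N j * Real.log (pB j)) ≤ 0 := by
    calc ∑ j, (N j * Real.log (s j) - N j * Real.log (pB j))
        ≤ ∑ j, (Ntot * s j - N j) := Finset.sum_le_sum (fun j _ => key j)
      _ = Ntot * (∑ j, s j) - Ntot := by
          rw [Finset.sum_sub_distrib, ← Finset.mul_sum]
      _ = 0 := by rw [hsum1]; ring
  rw [hbiB, hbiB]
  have hsum : ∑ j, ((∑ x ∈ B j, (n x : ℝ) * Real.log (r x)) - N j * Real.log (s j)) ≤
      ∑ j, ((∑ x ∈ B j, (n x : ℝ) * Real.log (p x)) - N j * Real.log (pB j)) :=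
    Finset.sum_le_sum (fun j _ => hf j)
  rw [Finset.sum_sub_distrib, Finset.sum_sub_distrib] at hsum
  rw [Finset.sum_sub_distrib] at gibbs
  linarith
end

section
/- With n(B_1), n(B_2), n(B_3), n(y_1), n(y_2) all positive, the system c_1 = (n(B_2) + c_2 n(y_2)) / (n(B_1) + n(B_2) + c_2 n(y_2)) together with the symmetric equation c_2 = (n(B_2) + c_1 n(y_1)) / (n(B_3) + n(B_2) + c_1 n(y_1)) has exactly one solution (c_1, c_2) with c_1, c_2 ∈ (0,1). -/
lemma uniq_pos_root (S K P b c : ℝ) (hS : 0 < S) (hP : 0 < P) (hb : 0 < b) (hc : 0 < c)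
    (e1 : S*b^2 + K*b - P = 0) (e2 : S*c^2 + K*c - P = 0) : b = c := by
  have h : (b - c) * (S*b*c + P) = 0 := by linear_combination c*e1 - b*e2
  have hpos : 0 < S*b*c + P := by positivity
  rcases mul_eq_zero.mp h with h' | h' <;> linarith

lemma root_props (S K P : ℝ) (hS : 0 < S) (hP : 0 < P) (hSKP : 0 < S + K - P) :
    ∃ c : ℝ, S*c^2 + K*c - P = 0 ∧ 0 < c ∧ c < 1 := by
  set s := Real.sqrt (K^2 + 4*S*P) with hsdef
  have hd : (0:ℝ) ≤ K^2 + 4*S*P := by positivity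
  have hsq : s ^ 2 = K^2 + 4*S*P := Real.sq_sqrt hd
  have hsn : 0 ≤ s := Real.sqrt_nonneg _
  refine ⟨(-K + s) / (2*S), ?_, ?_, ?_⟩
  · have h2 : 2*S*((-K + s)/(2*S)) = -K + s := by
      field_simp
    have h4 : 4*S*(S*((-K + s)/(2*S))^2 + K*((-K + s)/(2*S)) - P) = 0 := by
      linear_combination (2*S*((-K + s)/(2*S)) + s + K) * h2 + hsq
    have h4S : (4*S) ≠ 0 := by positivity
    exact (mul_eq_zero.mp h4).resolve_left h4S
  · have hK : K < s := by nlinarith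
    have : 0 < 2*S := by linarith
    apply div_pos <;> linarith
  · have h2 : 2*S*((-K + s)/(2*S)) = -K + s := by field_simp
    set c := (-K + s)/(2*S) with hcdef
    have h4 : 4*S*(S*c^2 + K*c - P) = 0 := by
      linear_combination (2*S*c + s + K) * h2 + hsq
    have hq : S*c^2 + K*c - P = 0 := (mul_eq_zero.mp h4).resolve_left (by positivity)
    by_contra h
    push_neg at h
    nlinarith [mul_nonneg (by linarith : (0:ℝ) ≤ c - 1) (by nlinarith : (0:ℝ) ≤ S*(c+1) + K)]

theorem stmt14 (nB1 nB2 nB3 ny1 ny2 : ℝ)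
    (h1 : 0 < nB1) (h2 : 0 < nB2) (h3 : 0 < nB3) (h4 : 0 < ny1) (h5 : 0 < ny2) :
    ∃! c : ℝ × ℝ, c.1 ∈ Set.Ioo (0:ℝ) 1 ∧ c.2 ∈ Set.Ioo (0:ℝ) 1 ∧
      c.1 = (nB2 + c.2 * ny2) / (nB1 + nB2 + c.2 * ny2) ∧
      c.2 = (nB2 + c.1 * ny1) / (nB3 + nB2 + c.1 * ny1) := by
  have hS : 0 < ny2*(nB3+nB2+ny1) := by positivity
  have hP : 0 < nB2*(nB1+nB2) + ny1*nB2 := by positivity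
  have hSKP : 0 < ny2*(nB3+nB2+ny1) + ((nB3+nB2)*(nB1+nB2) + ny1*nB2 - ny2*(nB2+ny1))
      - (nB2*(nB1+nB2) + ny1*nB2) := by nlinarith
  obtain ⟨c2, hq, hc0, hc1⟩ := root_props (ny2*(nB3+nB2+ny1))
    ((nB3+nB2)*(nB1+nB2) + ny1*nB2 - ny2*(nB2+ny1)) (nB2*(nB1+nB2) + ny1*nB2) hS hP hSKP
  have hden1 : 0 < nB1 + nB2 + c2 * ny2 := by positivity
  set c1 := (nB2 + c2*ny2) / (nB1 + nB2 + c2*ny2) with hc1def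
  have hc1pos : 0 < c1 := div_pos (by positivity) hden1
  have hc1lt : c1 < 1 := by rw [hc1def, div_lt_one hden1]; linarith
  have hden2 : 0 < nB3 + nB2 + c1 * ny1 := by positivity
  have ec1 : c1 * (nB1 + nB2 + c2*ny2) = nB2 + c2*ny2 := by
    rw [hc1def]; field_simp
  have key : (nB1+nB2+c2*ny2) * (c2*(nB3+nB2+c1*ny1) - (nB2+c1*ny1)) = 0 := by
    linear_combination hq + (c2*ny1 - ny1)*ec1
  have e2' : c2*(nB3+nB2+c1*ny1) = nB2+c1*ny1 := by
    rcases mul_eq_zero.mp key with h' | h'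
    · linarith
    · linarith
  have e2 : c2 = (nB2 + c1 * ny1) / (nB3 + nB2 + c1 * ny1) := by
    rw [eq_div_iff (ne_of_gt hden2)]; exact e2'
  refine ⟨(c1, c2), ⟨⟨hc1pos, hc1lt⟩, ⟨hc0, hc1⟩, hc1def, e2⟩, ?_⟩
  rintro ⟨a, b⟩ ⟨⟨ha0, ha1⟩, ⟨hb0, hb1⟩, ea, eb⟩
  simp only at ea eb ha0 ha1 hb0 hb1 ⊢
  have hdena : 0 < nB1 + nB2 + b * ny2 := by positivity
  have hdenb : 0 < nB3 + nB2 + a * ny1 := by positivity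
  have ea' : a * (nB1 + nB2 + b * ny2) = nB2 + b * ny2 := by
    rw [ea]; field_simp
  have eb' : b * (nB3 + nB2 + a * ny1) = nB2 + a * ny1 := by
    rw [eb]; field_simp
  have hqb : (ny2*(nB3+nB2+ny1))*b^2 + ((nB3+nB2)*(nB1+nB2) + ny1*nB2 - ny2*(nB2+ny1))*b
      - (nB2*(nB1+nB2) + ny1*nB2) = 0 := by
    linear_combination (nB1 + nB2 + b*ny2) * eb' + (ny1 - ny1*b) * ea'
  have hbc : b = c2 := uniq_pos_root _ _ _ b c2 hS hP hb0 hc0 hqb hq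
  have hac : a = c1 := by rw [ea, hbc, ← hc1def]
  exact Prod.ext hac hbc
end

section
/- In the two-edge model {a,c,e}, {b,d,e} with all frequencies positive, the feasible set is nonempty and there exists a probability assignment p with all values in (0,1) maximizing the likelihood, and at this maximizer n(e)/p(e) = n(a)+n(b)+n(c)+n(d)+n(e). -/
private lemma gibbs2 (m n x y : ℝ) (hm : 0 < m) (hn : 0 < n) (hx : 0 < x) (hy : 0 < y) :
    m * Real.log x + n * Real.log y ≤
      m * Real.log (m / (m + n)) + n * Real.log (n / (m + n)) + (m + n) * Real.log (x + y) := by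
  have hmn : 0 < m + n := by positivity
  have hs : 0 < x + y := by positivity
  set xs : ℝ := m / (m + n) * (x + y) with hxsdef
  set ys : ℝ := n / (m + n) * (x + y) with hysdef
  have hxs : 0 < xs := by positivity
  have hys : 0 < ys := by positivity
  have h1 : Real.log x - Real.log xs ≤ x / xs - 1 := by
    rw [← Real.log_div hx.ne' hxs.ne']
    exact Real.log_le_sub_one_of_pos (by positivity)
  have h2 : Real.log y - Real.log ys ≤ y / ys - 1 := by
    rw [← Real.log_div hy.ne' hys.ne']
    exact Real.log_le_sub_one_of_pos (by positivity)
  have e1 : m * (x / xs - 1) = x * (m + n) / (x + y) - m := by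
    rw [hxsdef]; field_simp
  have e2 : n * (y / ys - 1) = y * (m + n) / (x + y) - n := by
    rw [hysdef]; field_simp
  have esum : x * (m + n) / (x + y) + y * (m + n) / (x + y) = m + n := by
    field_simp
  have h1' : m * (Real.log x - Real.log xs) ≤ x * (m + n) / (x + y) - m := by
    rw [← e1]; exact mul_le_mul_of_nonneg_left h1 hm.le
  have h2' : n * (Real.log y - Real.log ys) ≤ y * (m + n) / (x + y) - n := by
    rw [← e2]; exact mul_le_mul_of_nonneg_left h2 hn.le
  have hlx : Real.log xs = Real.log (m / (m + n)) + Real.log (x + y) := by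
    rw [hxsdef, Real.log_mul (by positivity) hs.ne']
  have hly : Real.log ys = Real.log (n / (m + n)) + Real.log (x + y) := by
    rw [hysdef, Real.log_mul (by positivity) hs.ne']
  nlinarith [h1', h2']

theorem stmt16 (na nb nc nd nE : ℕ)
    (hna : 0 < na) (hnb : 0 < nb) (hnc : 0 < nc) (hnd : 0 < nd) (hnE : 0 < nE) :
    let N : ℝ := (na : ℝ) + nb + nc + nd + nE
    let Feas : ℝ → ℝ → ℝ → ℝ → ℝ → Prop := fun a b c d e =>
      a ∈ Set.Ioo (0:ℝ) 1 ∧ b ∈ Set.Ioo (0:ℝ) 1 ∧ c ∈ Set.Ioo (0:ℝ) 1 ∧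
      d ∈ Set.Ioo (0:ℝ) 1 ∧ e ∈ Set.Ioo (0:ℝ) 1 ∧ a + c + e = 1 ∧ b + d + e = 1
    let ℓ : ℝ → ℝ → ℝ → ℝ → ℝ → ℝ := fun a b c d e =>
      (na : ℝ) * Real.log a + (nb : ℝ) * Real.log b + (nc : ℝ) * Real.log c +
        (nd : ℝ) * Real.log d + (nE : ℝ) * Real.log e
    ∃ pa pb pc pd pe : ℝ, Feas pa pb pc pd pe ∧
      (∀ a b c d e, Feas a b c d e → ℓ a b c d e ≤ ℓ pa pb pc pd pe) ∧
      (nE : ℝ) / pe = N := by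
  intro N Feas ℓ
  have hA : (0:ℝ) < na := by exact_mod_cast hna
  have hB : (0:ℝ) < nb := by exact_mod_cast hnb
  have hC : (0:ℝ) < nc := by exact_mod_cast hnc
  have hD : (0:ℝ) < nd := by exact_mod_cast hnd
  have hE : (0:ℝ) < nE := by exact_mod_cast hnE
  set M : ℝ := (na : ℝ) + nb + nc + nd with hMdef
  have hM : 0 < M := by positivity
  have hN : 0 < N := by simp only [N]; positivity
  have hNM : N = M + (nE : ℝ) := by simp only [N, hMdef]; try ring
  have hMN1 : M / N < 1 := by rw [div_lt_one hN]; rw [hNM]; linarith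
  have hMN0 : 0 < M / N := by positivity
  refine ⟨(na / (na + nc)) * (M / N), (nb / (nb + nd)) * (M / N),
          (nc / (na + nc)) * (M / N), (nd / (nb + nd)) * (M / N), (nE : ℝ) / N, ?_, ?_, ?_⟩
  · refine ⟨⟨by positivity, ?_⟩, ⟨by positivity, ?_⟩, ⟨by positivity, ?_⟩,
      ⟨by positivity, ?_⟩, ⟨by positivity, ?_⟩, ?_, ?_⟩
    · calc (na:ℝ) / (na + nc) * (M / N) < 1 * 1 := by
            apply mul_lt_mul' ?_ hMN1 hMN0.le one_pos
            · rw [div_le_one (by positivity)]; linarith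
          _ = 1 := by ring
    · calc (nb:ℝ) / (nb + nd) * (M / N) < 1 * 1 := by
            apply mul_lt_mul' ?_ hMN1 hMN0.le one_pos
            · rw [div_le_one (by positivity)]; linarith
          _ = 1 := by ring
    · calc (nc:ℝ) / (na + nc) * (M / N) < 1 * 1 := by
            apply mul_lt_mul' ?_ hMN1 hMN0.le one_pos
            · rw [div_le_one (by positivity)]; linarith
          _ = 1 := by ring
    · calc (nd:ℝ) / (nb + nd) * (M / N) < 1 * 1 := by
            apply mul_lt_mul' ?_ hMN1 hMN0.le one_pos
            · rw [div_le_one (by positivity)]; linarith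
          _ = 1 := by ring
    · rw [div_lt_one hN]; rw [hNM]; linarith
    · field_simp
      rw [hNM]
    · field_simp
      rw [hNM]
  · intro a b c d e ⟨ha, hb, hc, hd, he, hace, hbde⟩
    have hac : a + c = 1 - e := by linarith
    have hbd : b + d = 1 - e := by linarith
    have h1e : 0 < 1 - e := by linarith [he.2]
    have g1 := gibbs2 (na:ℝ) (nc:ℝ) a c hA hC ha.1 hc.1
    have g2 := gibbs2 (nb:ℝ) (nd:ℝ) b d hB hD hb.1 hd.1
    have g3 := gibbs2 (nE:ℝ) M e (1 - e) hE hM he.1 h1e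
    rw [hac] at g1
    rw [hbd] at g2
    have he1 : e + (1 - e) = 1 := by ring
    rw [he1, Real.log_one, mul_zero, add_zero] at g3
    -- rewrite logs of the maximizer
    simp only [ℓ]
    have lpa : Real.log ((na:ℝ) / (na + nc) * (M / N)) =
        Real.log ((na:ℝ) / (na + nc)) + Real.log (M / N) :=
      Real.log_mul (by positivity) (by positivity)
    have lpc : Real.log ((nc:ℝ) / (na + nc) * (M / N)) =
        Real.log ((nc:ℝ) / (na + nc)) + Real.log (M / N) :=
      Real.log_mul (by positivity) (by positivity)
    have lpb : Real.log ((nb:ℝ) / (nb + nd) * (M / N)) =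
        Real.log ((nb:ℝ) / (nb + nd)) + Real.log (M / N) :=
      Real.log_mul (by positivity) (by positivity)
    have lpd : Real.log ((nd:ℝ) / (nb + nd) * (M / N)) =
        Real.log ((nd:ℝ) / (nb + nd)) + Real.log (M / N) :=
      Real.log_mul (by positivity) (by positivity)
    have hMeq : M / ((nE:ℝ) + M) = M / N := by rw [hNM]; ring_nf
    have hEeq : (nE:ℝ) / ((nE:ℝ) + M) = (nE:ℝ) / N := by rw [hNM]; ring_nf
    rw [hMeq, hEeq] at g3
    rw [lpa, lpb, lpc, lpd]
    have k1 : ((na:ℝ) + nc) * Real.log (1 - e) + ((nb:ℝ) + nd) * Real.log (1 - e)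
        = M * Real.log (1 - e) := by rw [hMdef]; ring
    have k2 : (na:ℝ) * Real.log (M / N) + (nc:ℝ) * Real.log (M / N)
        + (nb:ℝ) * Real.log (M / N) + (nd:ℝ) * Real.log (M / N)
        = M * Real.log (M / N) := by rw [hMdef]; ring
    linarith [g1, g2, g3, k1, k2]
  · rw [div_div_eq_mul_div, mul_comm, mul_div_assoc, div_self hE.ne', mul_one]
end

section
/- For the horizontal sum of k classical models with all frequencies positive, the maximum value of the likelihood equals Σ_i Σ_{x∈A_i} n(x)·ln(n(x)/n(A_i)), and in particular the maximal likelihood is strictly positive (the maximal value of the product form Π p(x)^{n(x)} is positive). -/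
/-!
On each edge `A i` the log-likelihood restricted to that edge is maximised by the empirical
frequencies `n x / n(A i)`: this is Gibbs' inequality, obtained by summing `log t ≤ t - 1`
against the weights `n x`. Since the edges partition the sample space, the log-likelihood is
the sum of these independent edge terms, and the edgewise maximisers glue to a single feasible
point. The likelihood is `exp` of the log-likelihood, so it is maximised at the same point,
with positive value `exp M`.
-/

open Finset Function Real

namespace Real

theorem sum_mul_log_le_sum_mul_log_div_sum {ι : Type*} {s : Finset ι} {w p : ι → ℝ}
    (hw : ∀ x ∈ s, 0 < w x) (hp : ∀ x ∈ s, 0 < p x) (hp_sum : ∑ x ∈ s, p x = 1) :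
    ∑ x ∈ s, w x * log (p x) ≤ ∑ x ∈ s, w x * log (w x / ∑ y ∈ s, w y) := by
  set W := ∑ y ∈ s, w y
  have hs : s.Nonempty := nonempty_of_sum_ne_zero (hp_sum.trans_ne one_ne_zero)
  have hW : 0 < W := sum_pos hw hs
  have hterm : ∀ x ∈ s, w x * log (p x) ≤ w x * log (w x / W) + (W * p x - w x) := by
    intro x hx
    have hq : 0 < w x / W := div_pos (hw x hx) hW
    have hlog : log (p x) - log (w x / W) ≤ p x / (w x / W) - 1 := by
      rw [← log_div (hp x hx).ne' hq.ne']
      exact log_le_sub_one_of_pos (div_pos (hp x hx) hq)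
    have hscale : w x * (p x / (w x / W) - 1) = W * p x - w x := by
      field_simp [(hw x hx).ne']
    linarith [mul_le_mul_of_nonneg_left hlog (hw x hx).le]
  have hcancel : ∑ x ∈ s, (W * p x - w x) = 0 := by
    rw [sum_sub_distrib, ← mul_sum, hp_sum, mul_one, sub_self]
  calc ∑ x ∈ s, w x * log (p x)
      ≤ ∑ x ∈ s, (w x * log (w x / W) + (W * p x - w x)) := sum_le_sum hterm
    _ = ∑ x ∈ s, w x * log (w x / W) := by rw [sum_add_distrib, hcancel, add_zero]

theorem prod_pow_eq_exp_sum_mul_log {ι : Type*} {s : Finset ι} {f : ι → ℝ} (n : ι → ℕ)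
    (hf : ∀ x ∈ s, 0 < f x) : ∏ x ∈ s, f x ^ n x = exp (∑ x ∈ s, n x * log (f x)) := by
  rw [exp_sum]
  exact prod_congr rfl fun x hx => by rw [exp_nat_mul, exp_log (hf x hx)]

end Real

section Cover

variable {α ι : Type*} [Fintype α] [Fintype ι] [DecidableEq α] {A : ι → Finset α}

theorem exists_mem_of_biUnion_eq_univ (hcover : univ.biUnion A = univ) (x : α) :
    ∃ i, x ∈ A i := by
  simpa using hcover.ge (mem_univ x)

theorem sum_eq_sum_sum_of_biUnion_eq_univ {M : Type*} [AddCommMonoid M]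
    (hdisj : Pairwise (Disjoint on A)) (hcover : univ.biUnion A = univ) (f : α → M) :
    ∑ x, f x = ∑ i, ∑ x ∈ A i, f x := by
  rw [← sum_biUnion fun i _ j _ hij => hdisj hij, hcover]

theorem exists_eq_on_of_biUnion_eq_univ {β : Type*} (hdisj : Pairwise (Disjoint on A))
    (hcover : univ.biUnion A = univ) (q : ι → α → β) :
    ∃ p : α → β, ∀ i, ∀ x ∈ A i, p x = q i x := by
  choose idx hidx using exists_mem_of_biUnion_eq_univ hcover
  refine ⟨fun x => q (idx x) x, fun i x hx => ?_⟩
  obtain rfl : idx x = i := by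
    by_contra h
    exact disjoint_left.mp (hdisj h) (hidx x) hx
  rfl

theorem isGreatest_sum_mul_log_of_biUnion_eq_univ (hdisj : Pairwise (Disjoint on A))
    (hne : ∀ i, (A i).Nonempty) (hcover : univ.biUnion A = univ) (w : α → ℝ)
    (hw : ∀ x, 0 < w x) :
    IsGreatest {y | ∃ p : α → ℝ, ((∀ x, 0 < p x ∧ p x ≤ 1) ∧ ∀ i, ∑ x ∈ A i, p x = 1) ∧
        y = ∑ x, w x * log (p x)}
      (∑ i, ∑ x ∈ A i, w x * log (w x / ∑ y ∈ A i, w y)) := by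
  have hW : ∀ i, 0 < ∑ y ∈ A i, w y := fun i => sum_pos (fun y _ => hw y) (hne i)
  obtain ⟨p₀, hp₀⟩ := exists_eq_on_of_biUnion_eq_univ hdisj hcover
    fun i x => w x / ∑ y ∈ A i, w y
  refine ⟨⟨p₀, ⟨fun x => ?_, fun i => ?_⟩, ?_⟩, ?_⟩
  · obtain ⟨i, hx⟩ := exists_mem_of_biUnion_eq_univ hcover x
    rw [hp₀ i x hx]
    exact ⟨div_pos (hw x) (hW i),
      div_le_one_of_le₀ (single_le_sum (fun y _ => (hw y).le) hx) (hW i).le⟩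
  · rw [sum_congr rfl (hp₀ i), ← sum_div, div_self (hW i).ne']
  · rw [sum_eq_sum_sum_of_biUnion_eq_univ hdisj hcover]
    exact sum_congr rfl fun i _ => sum_congr rfl fun x hx => by rw [hp₀ i x hx]
  · rintro _ ⟨p, ⟨hp, hp_sum⟩, rfl⟩
    rw [sum_eq_sum_sum_of_biUnion_eq_univ hdisj hcover]
    exact sum_le_sum fun i _ =>
      sum_mul_log_le_sum_mul_log_div_sum (fun x _ => hw x) (fun x _ => (hp x).1) (hp_sum i)

end Cover

theorem stmt18 {α : Type*} [Fintype α] [DecidableEq α] (k : ℕ)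
    (A : Fin k → Finset α)
    (hdisj : ∀ i j, i ≠ j → Disjoint (A i) (A j))
    (hne : ∀ i, (A i).Nonempty)
    (hcover : Finset.univ.biUnion A = Finset.univ)
    (n : α → ℕ) (hn : ∀ x, 1 ≤ n x) :
    let Feas : (α → ℝ) → Prop := fun p =>
      (∀ x, 0 < p x ∧ p x ≤ 1) ∧ ∀ i, ∑ x ∈ A i, p x = 1
    let nA : Fin k → ℝ := fun i => ∑ y ∈ A i, (n y : ℝ)
    let M : ℝ := ∑ i, ∑ x ∈ A i, (n x : ℝ) * Real.log ((n x : ℝ) / nA i)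
    let P : ℝ := ∏ i, ∏ x ∈ A i, ((n x : ℝ) / nA i) ^ (n x)
    IsGreatest {y | ∃ p, Feas p ∧ y = ∑ x, (n x : ℝ) * Real.log (p x)} M ∧
    IsGreatest {y | ∃ p, Feas p ∧ y = ∏ x, p x ^ (n x)} P ∧
    0 < P := by
  intro Feas nA M P
  have hn_pos : ∀ x, (0 : ℝ) < n x := fun x => Nat.cast_pos.mpr (hn x)
  have hM : IsGreatest {y | ∃ p, Feas p ∧ y = ∑ x, (n x : ℝ) * log (p x)} M :=
    isGreatest_sum_mul_log_of_biUnion_eq_univ (fun i j h => hdisj i j h) hne hcover _ hn_pos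
  have hP : P = exp M := by
    rw [exp_sum]
    exact prod_congr rfl fun i _ => prod_pow_eq_exp_sum_mul_log n fun x _ =>
      div_pos (hn_pos x) (sum_pos (fun y _ => hn_pos y) (hne i))
  have hlik : {y | ∃ p, Feas p ∧ y = ∏ x, p x ^ (n x)} =
      exp '' {y | ∃ p, Feas p ∧ y = ∑ x, (n x : ℝ) * log (p x)} := by
    ext y
    constructor
    · rintro ⟨p, hp, rfl⟩
      exact ⟨_, ⟨p, hp, rfl⟩, (prod_pow_eq_exp_sum_mul_log n fun x _ => (hp.1 x).1).symm⟩
    · rintro ⟨_, ⟨p, hp, rfl⟩, rfl⟩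
      exact ⟨p, hp, (prod_pow_eq_exp_sum_mul_log n fun x _ => (hp.1 x).1).symm⟩
  rw [hlik, hP]
  exact ⟨hM, exp_strictMono.map_isGreatest.mpr hM, exp_pos M⟩
end
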